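/- Let (R, B, Y) be a partition of V(T^F_N) with R, B independent and suppose Y contains no vertex of the larger color class C1(T^F_N). Then there exist a value y ∈ [0, |Y|] and coefficients z_j ∈ {−1, 0, 1} for j = 1,...,N with Σ_j |z_j| ≤ 2|Y| + 1 such that (F_N − (|R| − |B|) + |Y|)/2 = y + Σ_{j=1}^N z_j F_j. -/

import Mathlib

/-- Finite rooted trees: a node with a (possibly empty) list of subtrees. -/
inductive RTree where
  | node (children : List RTree)

/-- The list of subtrees of the root. -/
def RTree.children : RTree → List RTree
  | .node cs => cs

/-- `isPos t l` means the list of child indices `l` describes a vertex (position)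
of the rooted tree `t`; `[]` is the root. -/
def isPos : RTree → List ℕ → Prop
  | _, [] => True
  | t, i :: l => ∃ h : i < t.children.length, isPos (t.children.get ⟨i, h⟩) l

/-- The (unrooted) graph of a rooted tree on its positions: two positions are
adjacent iff one is obtained from the other by appending one child index. -/
def posGraph (t : RTree) : SimpleGraph {l : List ℕ // isPos t l} where
  Adj a b := (∃ i, b.1 = a.1 ++ [i]) ∨ (∃ i, a.1 = b.1 ++ [i])
  symm := by
    constructor
    rintro a b (⟨i, hi⟩ | ⟨i, hi⟩)
    · exact Or.inr ⟨i, hi⟩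
    · exact Or.inl ⟨i, hi⟩
  loopless := by
    constructor
    rintro a (⟨i, hi⟩ | ⟨i, hi⟩) <;> simpa using congrArg List.length hi

/-- The `N`-th Fibonacci tree. -/
def fibTree : ℕ → RTree
  | 0 => .node []
  | 1 => .node []
  | 2 => .node []
  | (n + 3) => .node [.node [fibTree (n + 2), fibTree (n + 1)]]

namespace FibPf



def F (j : ℕ) : ℤ := (Nat.fib j : ℤ)

lemma F_add_two (k : ℕ) : F (k+2) = F (k+1) + F k := by
  unfold F; push_cast [Nat.fib_add_two]; ring

lemma F_nonneg (k : ℕ) : 0 ≤ F k := by unfold F; positivity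

lemma F_one : F 1 = 1 := rfl
lemma F_two : F 2 = 1 := rfl
lemma F_three : F 3 = 2 := rfl

lemma F_mono {a b : ℕ} (h : a ≤ b) : F a ≤ F b := by
  unfold F; exact_mod_cast Nat.fib_mono h

lemma F_pos {a : ℕ} (h : 1 ≤ a) : 1 ≤ F a := by
  unfold F; exact_mod_cast Nat.fib_pos.2 h

def mval (S : Multiset (ℤ × ℕ)) : ℤ := (S.map (fun p => p.1 * F p.2)).sum
def mwt (S : Multiset (ℤ × ℕ)) : ℕ := (S.map (fun p => p.2 + 2)).sum
def wf (S : Multiset (ℤ × ℕ)) : Prop := ∀ p ∈ S, (p.1 = 1 ∨ p.1 = -1) ∧ 1 ≤ p.2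

lemma mval_cons (p : ℤ × ℕ) (S : Multiset (ℤ × ℕ)) :
    mval (p ::ₘ S) = p.1 * F p.2 + mval S := by simp [mval]

lemma mwt_cons (p : ℤ × ℕ) (S : Multiset (ℤ × ℕ)) :
    mwt (p ::ₘ S) = (p.2 + 2) + mwt S := by simp [mwt]

noncomputable def zf (S : Multiset (ℤ × ℕ)) (j : ℕ) : ℤ :=
  ((S.filter (fun q => q.2 = j)).map Prod.fst).sum

lemma zf_zero (j : ℕ) : zf 0 j = 0 := rfl

lemma zf_cons (p : ℤ × ℕ) (S : Multiset (ℤ × ℕ)) (j : ℕ) :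
    zf (p ::ₘ S) j = (if p.2 = j then p.1 else 0) + zf S j := by
  unfold zf
  rw [Multiset.filter_cons]
  split_ifs with h
  · simp
  · simp

lemma zf_sum (T : ℕ) (S : Multiset (ℤ × ℕ)) (h : ∀ p ∈ S, 1 ≤ p.2 ∧ p.2 ≤ T) :
    (∑ j ∈ Finset.Icc 1 T, zf S j * F j) = mval S := by
  induction S using Multiset.induction_on with
  | empty => simp [zf_zero, mval]
  | cons p S ih =>
    have hp := h p (Multiset.mem_cons_self p S)
    have hmem : p.2 ∈ Finset.Icc 1 T := Finset.mem_Icc.2 hp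
    have ih' := ih (fun q hq => h q (Multiset.mem_cons_of_mem hq))
    rw [mval_cons, ← ih']
    rw [Finset.sum_congr rfl (fun j _ => by rw [zf_cons, add_mul])]
    rw [Finset.sum_add_distrib]
    congr 1
    rw [Finset.sum_congr rfl (fun j _ => by rw [ite_mul, zero_mul])]
    rw [Finset.sum_ite_eq (Finset.Icc 1 T) p.2 (fun j => p.1 * F j)]
    simp [hmem]

lemma zf_wt (T : ℕ) (S : Multiset (ℤ × ℕ)) (h : ∀ p ∈ S, (p.1).natAbs ≤ 1) :
    (∑ j ∈ Finset.Icc 1 T, (zf S j).natAbs) ≤ Multiset.card S := by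
  induction S using Multiset.induction_on with
  | empty => simp [zf_zero]
  | cons p S ih =>
    have hp := h p (Multiset.mem_cons_self p S)
    have ih' := ih (fun q hq => h q (Multiset.mem_cons_of_mem hq))
    calc (∑ j ∈ Finset.Icc 1 T, (zf (p ::ₘ S) j).natAbs)
        ≤ ∑ j ∈ Finset.Icc 1 T, ((if p.2 = j then (p.1).natAbs else 0) + (zf S j).natAbs) := by
          refine Finset.sum_le_sum (fun j _ => ?_)
          rw [zf_cons]
          refine le_trans (Int.natAbs_add_le _ _) ?_
          gcongr
          split_ifs <;> simp
      _ = (∑ j ∈ Finset.Icc 1 T, (if p.2 = j then (p.1).natAbs else 0))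
            + ∑ j ∈ Finset.Icc 1 T, (zf S j).natAbs := Finset.sum_add_distrib
      _ ≤ 1 + Multiset.card S := by
          gcongr
          rw [Finset.sum_ite_eq (Finset.Icc 1 T) p.2 (fun _ => (p.1).natAbs)]
          split_ifs <;> simp [hp]
      _ = Multiset.card (p ::ₘ S) := by simp [add_comm]


lemma index_le_mwt {S : Multiset (ℤ × ℕ)} {p : ℤ × ℕ} (hp : p ∈ S) : p.2 + 2 ≤ mwt S := by
  exact Multiset.single_le_sum (fun x hx => Nat.zero_le x) _ (Multiset.mem_map_of_mem _ hp)

theorem rewriteNF : ∀ (n : ℕ) (S : Multiset (ℤ × ℕ)), mwt S ≤ n → wf S →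
    ∃ (T : ℕ) (z : ℕ → ℤ),
      (∀ j, z j = -1 ∨ z j = 0 ∨ z j = 1) ∧
      (∀ j, z j ≠ 0 → 1 ≤ j ∧ j ≤ T) ∧
      (∀ j, z j ≠ 0 → z (j+1) = 0) ∧
      (∀ j, z j ≠ 0 → z (j+2) ≠ -z j) ∧
      (∑ j ∈ Finset.Icc 1 T, z j * F j) = mval S ∧
      (∑ j ∈ Finset.Icc 1 T, (z j).natAbs) ≤ Multiset.card S := by
  intro n
  induction n using Nat.strong_induction_on with
  | _ n IH =>
    intro S hSn hwf
    by_cases H : ∃ x y S', S = x ::ₘ y ::ₘ S' ∧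
        (x.2 = y.2 ∨ y.2 = x.2 + 1 ∨ (y.2 = x.2 + 2 ∧ y.1 = -x.1))
    · obtain ⟨x, y, S', hS, hr⟩ := H
      have hxS : x ∈ S := by rw [hS]; exact Multiset.mem_cons_self _ _
      have hyS : y ∈ S := by rw [hS]; exact Multiset.mem_cons_of_mem (Multiset.mem_cons_self _ _)
      have hwfS' : wf S' := fun p hp => hwf p (by rw [hS]; exact Multiset.mem_cons_of_mem (Multiset.mem_cons_of_mem hp))
      have key : ∀ S2 : Multiset (ℤ × ℕ), wf S2 → mval S2 = mval S →
          Multiset.card S2 ≤ Multiset.card S → mwt S2 < mwt S →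
          (∃ (T : ℕ) (z : ℕ → ℤ), (∀ j, z j = -1 ∨ z j = 0 ∨ z j = 1) ∧
            (∀ j, z j ≠ 0 → 1 ≤ j ∧ j ≤ T) ∧
            (∀ j, z j ≠ 0 → z (j+1) = 0) ∧
            (∀ j, z j ≠ 0 → z (j+2) ≠ -z j) ∧
            (∑ j ∈ Finset.Icc 1 T, z j * F j) = mval S ∧
            (∑ j ∈ Finset.Icc 1 T, (z j).natAbs) ≤ Multiset.card S) := by
        intro S2 w2 v2 c2 m2
        obtain ⟨T, z, h1, h2, h3, h4, h5, h6⟩ := IH (mwt S2) (by omega) S2 le_rfl w2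
        exact ⟨T, z, h1, h2, h3, h4, by rw [h5, v2], le_trans h6 c2⟩
      obtain ⟨sx, a⟩ := x
      obtain ⟨sy, b⟩ := y
      have hsx := (hwf _ hxS).1
      have hsy := (hwf _ hyS).1
      have ha1 : 1 ≤ a := (hwf _ hxS).2
      have hb1 : 1 ≤ b := (hwf _ hyS).2
      simp only at hsx hsy ha1 hb1
      have hvS : mval S = sx * F a + sy * F b + mval S' := by
        rw [hS, mval_cons, mval_cons]; ring
      have hcS : Multiset.card S = Multiset.card S' + 2 := by rw [hS]; simp
      have hmS : mwt S = (a+2) + (b+2) + mwt S' := by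
        rw [hS, mwt_cons, mwt_cons]; ring
      have hwf_cons : ∀ (s : ℤ) (c : ℕ), (s = 1 ∨ s = -1) → 1 ≤ c → wf ((s, c) ::ₘ S') := by
        intro s c hs hc p hp
        rcases Multiset.mem_cons.1 hp with h | h
        · subst h; exact ⟨hs, hc⟩
        · exact hwfS' p h
      have hwf_cons2 : ∀ (s s' : ℤ) (c c' : ℕ), (s = 1 ∨ s = -1) → (s' = 1 ∨ s' = -1) →
          1 ≤ c → 1 ≤ c' → wf ((s, c) ::ₘ (s', c') ::ₘ S') := by
        intro s s' c c' hs hs' hc hc' p hp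
        rcases Multiset.mem_cons.1 hp with h | h
        · subst h; exact ⟨hs, hc⟩
        · exact hwf_cons s' c' hs' hc' p h
      rcases hr with hab | hab | ⟨hab, hsign⟩
      · -- equal indices
        subst hab
        by_cases hss : sy = -sx
        · -- cancel
        
          refine key S' hwfS' ?_ (by rw [hcS]; omega) (by rw [hmS]; omega)
          rw [hvS, hss]; ring
        · have hss' : sy = sx := by rcases hsx with h|h <;> rcases hsy with h'|h' <;> omega
          subst hss'
          by_cases h3a : 3 ≤ a
          · obtain ⟨k, rfl⟩ : ∃ k, a = k + 3 := ⟨a - 3, by omega⟩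
            refine key ((sy, k+4) ::ₘ (sy, k+1) ::ₘ S') (hwf_cons2 _ _ _ _ hsy hsy (by omega) (by omega)) ?_ (by simp only [Multiset.card_cons, hcS]; omega) (by simp only [mwt_cons, hmS]; omega)
            rw [mval_cons, mval_cons, hvS]
            have e1 : F (k+4) = F (k+3) + F (k+2) := F_add_two (k+2)
            have e2 : F (k+3) = F (k+2) + F (k+1) := F_add_two (k+1)
            simp only
            rw [e1, e2]; ring
          · -- a ∈ {1,2}, F a = 1, 2 = F 3
            have hFa : F a = 1 := by interval_cases a <;> rfl
            refine key ((sy, 3) ::ₘ S') (hwf_cons _ _ hsy (by omega)) ?_ (by simp only [Multiset.card_cons, hcS]; omega) (by simp only [mwt_cons, hmS]; omega)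
            rw [mval_cons, hvS, hFa]
            simp only [F_three]; ring
      · -- b = a + 1
        subst hab
        by_cases hss : sy = sx
        · subst hss
          refine key ((sy, a+2) ::ₘ S') (hwf_cons _ _ hsy (by omega)) ?_ (by simp only [Multiset.card_cons, hcS]; omega) (by simp only [mwt_cons, hmS]; omega)
          rw [mval_cons, hvS, F_add_two a]; simp only; ring
        · have hss' : sy = -sx := by rcases hsx with h|h <;> rcases hsy with h'|h' <;> omega
          subst hss'
          rcases Nat.lt_or_ge a 2 with h2a | h2a
          · -- a = 1 : cancel
            have ha : a = 1 := by omega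
            subst ha
            refine key S' hwfS' ?_ (by rw [hcS]; omega) (by rw [hmS]; omega)
            rw [hvS, F_one, F_two]; ring
          · obtain ⟨k, rfl⟩ : ∃ k, a = k + 2 := ⟨a - 2, by omega⟩
            refine key ((-sx, k+1) ::ₘ S') (hwf_cons _ _ (by rcases hsx with h|h <;> omega) (by omega)) ?_ (by simp only [Multiset.card_cons, hcS]; omega) (by simp only [mwt_cons, hmS]; omega)
            rw [mval_cons, hvS, F_add_two (k+1)]; simp only; ring
      · -- b = a + 2, opposite signs
        subst hab hsign
        refine key ((-sx, a+1) ::ₘ S') (hwf_cons _ _ (by rcases hsx with h|h <;> omega) (by omega)) ?_ (by simp only [Multiset.card_cons, hcS]; omega) (by simp only [mwt_cons, hmS]; omega)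
        rw [mval_cons, hvS, F_add_two a]; simp only; ring
    · -- no rule applies: already in normal form
      have pairs : ∀ u ∈ S, ∀ v ∈ S.erase u,
          ¬(u.2 = v.2 ∨ v.2 = u.2 + 1 ∨ (v.2 = u.2 + 2 ∧ v.1 = -u.1)) := by
        intro u hu v hv hr
        exact H ⟨u, v, (S.erase u).erase v,
          (by rw [Multiset.cons_erase hv, Multiset.cons_erase hu]), hr⟩
      have hcard1 : ∀ j, Multiset.card (S.filter (fun q => q.2 = j)) ≤ 1 := by
        intro j
        by_contra hc
        push_neg at hc
        have h0 : 0 < Multiset.card (S.filter (fun q => q.2 = j)) :=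
          Nat.lt_of_lt_of_le Nat.zero_lt_one hc.le
        obtain ⟨u, hu⟩ := Multiset.card_pos_iff_exists_mem.1 h0
        have hc2 : 0 < Multiset.card ((S.filter (fun q => q.2 = j)).erase u) := by
          rw [Multiset.card_erase_of_mem hu]
          exact Nat.lt_pred_iff.2 hc
        obtain ⟨v, hv⟩ := Multiset.card_pos_iff_exists_mem.1 hc2
        have huS : u ∈ S := Multiset.mem_of_le (Multiset.filter_le _ S) hu
        have hvS' : v ∈ S.erase u :=
          Multiset.mem_of_le (Multiset.erase_le_erase u (Multiset.filter_le _ S)) hv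
        have hju : u.2 = j := (Multiset.mem_filter.1 hu).2
        have hjv : v.2 = j := (Multiset.mem_filter.1 (Multiset.mem_of_mem_erase hv)).2
        exact pairs u huS v hvS' (Or.inl (by omega))
      have hchar : ∀ j, zf S j = 0 ∨ ∃ p ∈ S, p.2 = j ∧ zf S j = p.1 := by
        intro j
        rcases Nat.lt_or_ge (Multiset.card (S.filter (fun q => q.2 = j))) 1 with h | h
        · left
          have : S.filter (fun q => q.2 = j) = 0 := by
            rw [← Multiset.card_eq_zero]; omega
          unfold zf; rw [this]; rfl
        · right
          have h1 : Multiset.card (S.filter (fun q => q.2 = j)) = 1 := le_antisymm (hcard1 j) h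
          obtain ⟨p, hp⟩ := Multiset.card_eq_one.1 h1
          have hpmem : p ∈ S.filter (fun q => q.2 = j) := by
            rw [hp]; exact Multiset.mem_singleton_self p
          refine ⟨p, Multiset.mem_of_le (Multiset.filter_le _ S) hpmem,
            (Multiset.mem_filter.1 hpmem).2, ?_⟩
          unfold zf; rw [hp]; simp
      have hmem_of_ne : ∀ j, zf S j ≠ 0 → ∃ p ∈ S, p.2 = j ∧ zf S j = p.1 := by
        intro j hj
        rcases hchar j with h | h
        · exact absurd h hj
        · exact h
      refine ⟨mwt S, zf S, ?_, ?_, ?_, ?_, ?_, ?_⟩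
      · intro j
        rcases hchar j with h | ⟨p, hp, _, hz⟩
        · right; left; exact h
        · rcases (hwf p hp).1 with h1 | h1
          · right; right; omega
          · left; omega
      · intro j hj
        obtain ⟨p, hp, hpj, _⟩ := hmem_of_ne j hj
        have := index_le_mwt hp
        have := (hwf p hp).2
        omega
      · intro j hj
        by_contra hj1
        obtain ⟨p, hp, hpj, _⟩ := hmem_of_ne j hj
        obtain ⟨q, hq, hqj, _⟩ := hmem_of_ne (j+1) hj1
        have hne : q ≠ p := by intro h; rw [h] at hqj; omega
        exact pairs p hp q ((Multiset.mem_erase_of_ne hne).2 hq) (Or.inr (Or.inl (by omega)))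
      · intro j hj heq
        obtain ⟨p, hp, hpj, hzp⟩ := hmem_of_ne j hj
        obtain ⟨q, hq, hqj, hzq⟩ := hmem_of_ne (j+2) (by rw [heq]; simpa using hj)
        have hne : q ≠ p := by intro h; rw [h] at hqj; omega
        refine pairs p hp q ((Multiset.mem_erase_of_ne hne).2 hq) (Or.inr (Or.inr ⟨by omega, ?_⟩))
        rw [← hzq, ← hzp, heq]
      · exact zf_sum (mwt S) S (fun p hp => ⟨(hwf p hp).2, by have := index_le_mwt hp; omega⟩)
      · exact zf_wt (mwt S) S (fun p hp => by rcases (hwf p hp).1 with h|h <;> simp [h])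


lemma sumgap (e : ℤ) (he : e ≠ 0) : ∀ (s : ℕ) (z : ℕ → ℤ),
    (∀ j, z j ≠ 0 → z (j+1) = 0) →
    (∑ j ∈ Finset.Icc 1 s, (if z j = e then F j else 0)) ≤ F (s+1) := by
  intro s
  induction s using Nat.strong_induction_on with
  | _ s IH =>
    intro z hnf
    match s with
    | 0 => simp [F_one]
    | 1 =>
      rw [show Finset.Icc 1 1 = {1} from rfl, Finset.sum_singleton]
      split_ifs
      · exact F_mono (by omega)
      · exact F_nonneg 2
    | (k+2) =>
      rw [Finset.sum_Icc_succ_top (by omega)]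
      by_cases hz : z (k+2) = e
      · have hz1 : z (k+1) = 0 := by
          by_contra h
          exact he ((hz.symm).trans (hnf (k+1) h))
        have h1 : (if z (k+1) = e then F (k+1) else 0) = 0 := by
          rw [hz1]; simp [Ne.symm he]
        rw [Finset.sum_Icc_succ_top (by omega), h1, if_pos hz]
        have := IH k (by omega) z hnf
        have hF := F_add_two (k+1)
        linarith
      · rw [if_neg hz]
        have := IH (k+1) (by omega) z hnf
        have := F_mono (show k+2 ≤ k+3 by omega)
        linarith

theorem cap : ∀ (T : ℕ) (z : ℕ → ℤ) (M : ℕ), 2 ≤ M →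
    (∀ j, z j = -1 ∨ z j = 0 ∨ z j = 1) →
    (∀ j, z j ≠ 0 → 1 ≤ j ∧ j ≤ T) →
    (∀ j, z j ≠ 0 → z (j+1) = 0) →
    (∀ j, z j ≠ 0 → z (j+2) ≠ -z j) →
    0 ≤ (∑ j ∈ Finset.Icc 1 T, z j * F j) →
    (∑ j ∈ Finset.Icc 1 T, z j * F j) ≤ F M →
    ∃ z' : ℕ → ℤ, (∀ j, z' j = -1 ∨ z' j = 0 ∨ z' j = 1) ∧
      (∀ j, z' j ≠ 0 → 1 ≤ j ∧ j ≤ M) ∧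
      (∑ j ∈ Finset.Icc 1 M, z' j * F j) = (∑ j ∈ Finset.Icc 1 T, z j * F j) ∧
      (∑ j ∈ Finset.Icc 1 M, (z' j).natAbs) ≤ ∑ j ∈ Finset.Icc 1 T, (z j).natAbs := by
  intro T
  induction T using Nat.strong_induction_on with
  | _ T IH =>
    intro z M hM htern hsupp hnf1 hnf2 hv0 hvM
    by_cases hTM : T ≤ M
    · refine ⟨z, htern, fun j hj => ⟨(hsupp j hj).1, le_trans (hsupp j hj).2 hTM⟩, ?_, ?_⟩
      · exact (Finset.sum_subset (Finset.Icc_subset_Icc_right hTM) (fun x _ hx => by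
          have : z x = 0 := by
            by_contra h
            exact hx (Finset.mem_Icc.2 ⟨(hsupp x h).1, (hsupp x h).2⟩)
          rw [this, zero_mul])).symm
      · exact le_of_eq (Finset.sum_subset (Finset.Icc_subset_Icc_right hTM) (fun x _ hx => by
          have : z x = 0 := by
            by_contra h
            exact hx (Finset.mem_Icc.2 ⟨(hsupp x h).1, (hsupp x h).2⟩)
          rw [this]; rfl)).symm
    · push_neg at hTM
      obtain ⟨m, rfl⟩ : ∃ m, T = m + 3 := ⟨T - 3, by omega⟩
      by_cases hzT : z (m+3) = 0
      · have hsupp' : ∀ j, z j ≠ 0 → 1 ≤ j ∧ j ≤ m + 2 := by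
          intro j hj
          have := hsupp j hj
          rcases Nat.lt_or_ge j (m+3) with h | h
          · exact ⟨this.1, by omega⟩
          · exfalso; have : j = m + 3 := by omega
            rw [this] at hj; exact hj hzT
        have hsum : (∑ j ∈ Finset.Icc 1 (m+3), z j * F j) = ∑ j ∈ Finset.Icc 1 (m+2), z j * F j := by
          rw [Finset.sum_Icc_succ_top (by omega), hzT, zero_mul, add_zero]
        have hsumw : (∑ j ∈ Finset.Icc 1 (m+3), (z j).natAbs) = ∑ j ∈ Finset.Icc 1 (m+2), (z j).natAbs := by
          rw [Finset.sum_Icc_succ_top (by omega), hzT]; rfl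
        rw [hsum, hsumw]
        exact IH (m+2) (by omega) z M hM htern hsupp' hnf1 hnf2 (by rw [← hsum]; exact hv0) (by rw [← hsum]; exact hvM)
      · by_cases hvFM : (∑ j ∈ Finset.Icc 1 (m+3), z j * F j) = F M
        · refine ⟨fun j => if j = M then 1 else 0, ?_, ?_, ?_, ?_⟩
          · intro j; by_cases h : j = M <;> simp [h]
          · intro j hj
            by_cases h : j = M
            · subst h; exact ⟨by omega, le_rfl⟩
            · exfalso; apply hj; simp [h]
          · have e1 : ∀ j ∈ Finset.Icc 1 M, (if j = M then (1:ℤ) else 0) * F j = if j = M then F M else 0 := by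
              intro j _; by_cases h : j = M <;> simp [h]
            rw [Finset.sum_congr rfl e1,
              Finset.sum_ite_eq' (Finset.Icc 1 M) M (fun _ => F M), if_pos (Finset.mem_Icc.2 ⟨by omega, le_rfl⟩), hvFM]
          · have e1 : ∀ j ∈ Finset.Icc 1 M, ((if j = M then (1:ℤ) else 0)).natAbs = if j = M then 1 else 0 := by
              intro j _; by_cases h : j = M <;> simp [h]
            rw [Finset.sum_congr rfl e1,
              Finset.sum_ite_eq' (Finset.Icc 1 M) M (fun _ => 1), if_pos (Finset.mem_Icc.2 ⟨by omega, le_rfl⟩)]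
            calc 1 ≤ (z (m+3)).natAbs := Int.natAbs_pos.2 hzT
              _ ≤ ∑ j ∈ Finset.Icc 1 (m+3), (z j).natAbs :=
                  Finset.single_le_sum (f := fun j => (z j).natAbs) (fun i _ => Nat.zero_le _)
                    (Finset.mem_Icc.2 ⟨by omega, le_rfl⟩)
        · exfalso
          have hz2 : z (m+2) = 0 := by
            by_contra h
            exact hzT (hnf1 (m+2) h)
          have hsplit : (∑ j ∈ Finset.Icc 1 (m+3), z j * F j)
              = (∑ j ∈ Finset.Icc 1 (m+1), z j * F j) + z (m+3) * F (m+3) := by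
            rw [Finset.sum_Icc_succ_top (by omega : 1 ≤ m + 3), Finset.sum_Icc_succ_top (by omega : 1 ≤ m + 2), hz2, zero_mul, add_zero]
          rcases htern (m+3) with hs | hs | hs
          · -- z (m+3) = -1 : value negative
            have hup : ∀ j ∈ Finset.Icc 1 (m+1), z j * F j ≤ (if z j = 1 then F j else 0) := by
              intro j _
              rcases htern j with h | h | h <;> rw [h] <;> simp [F_nonneg j]
            have h1 : z (m+1) ≠ 1 := by
              intro h
              exact (hnf2 (m+1) (by rw [h]; omega)) (by rw [hs, h])
            have hle : (∑ j ∈ Finset.Icc 1 (m+1), z j * F j) ≤ F (m+1) := by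
              calc (∑ j ∈ Finset.Icc 1 (m+1), z j * F j)
                  ≤ ∑ j ∈ Finset.Icc 1 (m+1), (if z j = 1 then F j else 0) := Finset.sum_le_sum hup
                _ = ∑ j ∈ Finset.Icc 1 m, (if z j = 1 then F j else 0) := by
                    rw [Finset.sum_Icc_succ_top (by omega), if_neg h1, add_zero]
                _ ≤ F (m+1) := sumgap 1 one_ne_zero m z hnf1
            have hF3 : F (m+1) < F (m+3) := by
              have := F_add_two (m+1)
              have := F_pos (show 1 ≤ m+2 by omega)
              have := F_mono (show m+1 ≤ m+2 by omega)
              linarith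
            rw [hsplit, hs] at hv0
            linarith
          · exact hzT hs
          · -- z (m+3) = 1 : value ≥ F (m+2) ≥ F M, combined with ≤ and ≠ : contradiction
            have hup : ∀ j ∈ Finset.Icc 1 (m+1), -(if z j = -1 then F j else 0) ≤ z j * F j := by
              intro j _
              rcases htern j with h | h | h <;> rw [h] <;> simp [F_nonneg j]
            have h1 : z (m+1) ≠ -1 := by
              intro h
              exact (hnf2 (m+1) (by rw [h]; omega)) (by rw [hs, h]; rfl)
            have hle : -(F (m+1)) ≤ (∑ j ∈ Finset.Icc 1 (m+1), z j * F j) := by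
              calc -(F (m+1)) ≤ -(∑ j ∈ Finset.Icc 1 m, (if z j = -1 then F j else 0)) := by
                    have := sumgap (-1) (by omega) m z hnf1
                    linarith
                _ = -(∑ j ∈ Finset.Icc 1 (m+1), (if z j = -1 then F j else 0)) := by
                    rw [Finset.sum_Icc_succ_top (by omega), if_neg h1, add_zero]
                _ = ∑ j ∈ Finset.Icc 1 (m+1), -(if z j = -1 then F j else 0) := by
                    rw [Finset.sum_neg_distrib]
                _ ≤ ∑ j ∈ Finset.Icc 1 (m+1), z j * F j := Finset.sum_le_sum hup
            have hge : F (m+2) ≤ (∑ j ∈ Finset.Icc 1 (m+3), z j * F j) := by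
              rw [hsplit, hs, one_mul]
              have := F_add_two (m+1)
              linarith
            have hMm : F M ≤ F (m+2) := F_mono (by omega)
            have : (∑ j ∈ Finset.Icc 1 (m+3), z j * F j) = F M := le_antisymm hvM (by linarith)
            exact hvFM this


noncomputable def mvalHom : Multiset (ℤ × ℕ) →+ ℤ where
  toFun := mval
  map_zero' := rfl
  map_add' := fun a b => by simp [mval]

lemma mval_replicate (k : ℕ) (p : ℤ × ℕ) :
    mval (Multiset.replicate k p) = (k : ℤ) * (p.1 * F p.2) := by
  simp [mval, Multiset.map_replicate, Multiset.sum_replicate, nsmul_eq_mul]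

theorem represent (M : ℕ) (hM : 2 ≤ M) (c : ℕ → ℤ) (ε : ℤ) (hε : ε = 0 ∨ ε = 1)
    (hv0 : 0 ≤ ε * F M + ∑ j ∈ Finset.Icc 1 M, c j * F j)
    (hvM : ε * F M + ∑ j ∈ Finset.Icc 1 M, c j * F j ≤ F M) :
    ∃ z : ℕ → ℤ, (∀ j, z j = -1 ∨ z j = 0 ∨ z j = 1) ∧
      (∑ j ∈ Finset.Icc 1 M, z j * F j) = ε * F M + ∑ j ∈ Finset.Icc 1 M, c j * F j ∧
      (∑ j ∈ Finset.Icc 1 M, (z j).natAbs) ≤ ε.toNat + ∑ j ∈ Finset.Icc 1 M, (c j).natAbs := by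
  classical
  set S : Multiset (ℤ × ℕ) :=
    (∑ j ∈ Finset.Icc 1 M, Multiset.replicate (c j).natAbs ((if c j < 0 then (-1:ℤ) else 1), j))
      + Multiset.replicate ε.toNat (1, M) with hSdef
  have hmval : mval S = ε * F M + ∑ j ∈ Finset.Icc 1 M, c j * F j := by
    rw [hSdef]
    rw [show mval = ⇑mvalHom from rfl, map_add, map_sum]
    have h1 : ∀ j ∈ Finset.Icc 1 M,
        mvalHom (Multiset.replicate (c j).natAbs ((if c j < 0 then (-1:ℤ) else 1), j)) = c j * F j := by
      intro j _
      rw [show (⇑mvalHom) = mval from rfl, mval_replicate]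
      rcases lt_or_ge (c j) 0 with h | h
      · have hn : ((c j).natAbs : ℤ) = -c j := by omega
        rw [if_pos h, hn]; ring
      · have hn : ((c j).natAbs : ℤ) = c j := by omega
        rw [if_neg (not_lt.2 h), hn]; ring
    rw [Finset.sum_congr rfl h1]
    rw [show (⇑mvalHom) = mval from rfl, mval_replicate]
    have h2 : ((ε.toNat : ℤ)) = ε := by rcases hε with h|h <;> simp [h]
    rw [h2]; ring
  have hcard : Multiset.card S = (∑ j ∈ Finset.Icc 1 M, (c j).natAbs) + ε.toNat := by
    rw [hSdef]
    rw [Multiset.card_add, Multiset.card_replicate]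
    congr 1
    have hcs : ∀ (s : Finset ℕ) (f : ℕ → Multiset (ℤ × ℕ)),
        Multiset.card (∑ j ∈ s, f j) = ∑ j ∈ s, Multiset.card (f j) := by
      intro s f
      induction s using Finset.cons_induction with
      | empty => simp
      | cons a s ha ih => simp [Finset.sum_cons, ih]
    rw [hcs]
    refine Finset.sum_congr rfl (fun j _ => ?_)
    simp
  have hwfS : wf S := by
    intro p hp
    rw [hSdef] at hp
    rcases Multiset.mem_add.1 hp with h | h
    · rw [Multiset.mem_sum] at h
      obtain ⟨j, hj, hmem⟩ := h
      have := Multiset.eq_of_mem_replicate hmem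
      subst this
      constructor
      · split_ifs <;> simp
      · exact (Finset.mem_Icc.1 hj).1
    · have := Multiset.eq_of_mem_replicate h
      subst this
      exact ⟨Or.inl rfl, by omega⟩
  obtain ⟨T, z, htern, hsupp, hnf1, hnf2, hval, hwt⟩ := rewriteNF (mwt S) S le_rfl hwfS
  obtain ⟨z', htern', hsupp', hval', hwt'⟩ := cap T z M hM htern hsupp hnf1 hnf2
    (by rw [hval, hmval]; exact hv0) (by rw [hval, hmval]; exact hvM)
  refine ⟨z', htern', ?_, ?_⟩
  · rw [hval', hval, hmval]
  · calc (∑ j ∈ Finset.Icc 1 M, (z' j).natAbs) ≤ ∑ j ∈ Finset.Icc 1 T, (z j).natAbs := hwt'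
      _ ≤ Multiset.card S := hwt
      _ = (∑ j ∈ Finset.Icc 1 M, (c j).natAbs) + ε.toNat := hcard
      _ = ε.toNat + ∑ j ∈ Finset.Icc 1 M, (c j).natAbs := by omega



abbrev V (N : ℕ) := {l : List ℕ // isPos (fibTree N) l}

lemma isPos_leaf (l : List ℕ) (h : isPos (RTree.node []) l) : l = [] := by
  cases l with
  | nil => rfl
  | cons i l' =>
    obtain ⟨hlt, -⟩ := h
    simp [RTree.children] at hlt

def rt (N : ℕ) : V N := ⟨[], trivial⟩

def cp (n : ℕ) : V (n+3) := ⟨[0], ⟨Nat.zero_lt_one, trivial⟩⟩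

def iA (n : ℕ) (a : V (n+2)) : V (n+3) :=
  ⟨0::0::a.1, ⟨Nat.zero_lt_one, ⟨Nat.zero_lt_two, a.2⟩⟩⟩

def iB (n : ℕ) (b : V (n+1)) : V (n+3) :=
  ⟨0::1::b.1, ⟨Nat.zero_lt_one, ⟨Nat.one_lt_two, b.2⟩⟩⟩

lemma iA_inj (n : ℕ) : Function.Injective (iA n) := by
  intro a b h
  have := congrArg Subtype.val h
  simp only [iA] at this
  exact Subtype.ext (by simpa using this)

lemma iB_inj (n : ℕ) : Function.Injective (iB n) := by
  intro a b h
  have := congrArg Subtype.val h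
  simp only [iB] at this
  exact Subtype.ext (by simpa using this)

lemma pos_char {n : ℕ} {l : List ℕ} (h : isPos (fibTree (n+3)) l) :
    l = [] ∨ l = [0] ∨ (∃ m, l = 0::0::m ∧ isPos (fibTree (n+2)) m) ∨
      (∃ m, l = 0::1::m ∧ isPos (fibTree (n+1)) m) := by
  rcases l with - | ⟨i, l1⟩
  · exact Or.inl rfl
  obtain ⟨hi, h2⟩ := h
  have hi0 : i = 0 := by
    have : (fibTree (n+3)).children.length = 1 := rfl
    omega
  subst hi0
  rcases l1 with - | ⟨j, l2⟩
  · exact Or.inr (Or.inl rfl)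
  obtain ⟨hj, h3⟩ := h2
  have hj2 : j < 2 := hj
  interval_cases j
  · exact Or.inr (Or.inr (Or.inl ⟨l2, rfl, h3⟩))
  · exact Or.inr (Or.inr (Or.inr ⟨l2, rfl, h3⟩))

lemma univ_decomp (n : ℕ) :
    (Set.univ : Set (V (n+3))) =
      {rt (n+3)} ∪ {cp n} ∪ Set.range (iA n) ∪ Set.range (iB n) := by
  ext v
  simp only [Set.mem_univ, true_iff, Set.mem_union, Set.mem_singleton_iff, Set.mem_range]
  rcases pos_char v.2 with h | h | ⟨m, hm, hp⟩ | ⟨m, hm, hp⟩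
  · exact Or.inl (Or.inl (Or.inl (Subtype.ext h)))
  · exact Or.inl (Or.inl (Or.inr (Subtype.ext h)))
  · exact Or.inl (Or.inr ⟨⟨m, hp⟩, Subtype.ext hm.symm⟩)
  · exact Or.inr ⟨⟨m, hp⟩, Subtype.ext hm.symm⟩

theorem finiteV : ∀ N, Finite (V N) := by
  intro N
  induction N using Nat.strong_induction_on with
  | _ N IH =>
    rcases N with - | (- | (- | n))
    · haveI : Subsingleton (V 0) :=
        ⟨fun a b => Subtype.ext ((isPos_leaf _ a.2).trans (isPos_leaf _ b.2).symm)⟩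
      exact Finite.of_subsingleton
    · haveI : Subsingleton (V 1) :=
        ⟨fun a b => Subtype.ext ((isPos_leaf _ a.2).trans (isPos_leaf _ b.2).symm)⟩
      exact Finite.of_subsingleton
    · haveI : Subsingleton (V 2) :=
        ⟨fun a b => Subtype.ext ((isPos_leaf _ a.2).trans (isPos_leaf _ b.2).symm)⟩
      exact Finite.of_subsingleton
    · haveI := IH (n+2) (by omega)
      haveI := IH (n+1) (by omega)
      rw [← Set.finite_univ_iff, univ_decomp n]
      exact (((Set.finite_singleton _).union (Set.finite_singleton _)).union
        (Set.finite_range _)).union (Set.finite_range _)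

open Classical in
lemma card_singleton_inter {α : Type*} [Finite α] (S : Set α) (x : α) :
    (S ∩ {x}).ncard = if x ∈ S then 1 else 0 := by
  split_ifs with hx
  · rw [Set.inter_eq_right.2 (Set.singleton_subset_iff.2 hx), Set.ncard_singleton]
  · rw [show S ∩ {x} = ∅ from by
      ext y; simp only [Set.mem_inter_iff, Set.mem_singleton_iff, Set.mem_empty_iff_false,
        iff_false, not_and]
      rintro hy rfl; exact hx hy]
    exact Set.ncard_empty _

open Classical in
lemma card_decomp (n : ℕ) (S : Set (V (n+3))) :
    Nat.card S = ((if rt (n+3) ∈ S then 1 else 0) + (if cp n ∈ S then 1 else 0)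
      + Nat.card (iA n ⁻¹' S) + Nat.card (iB n ⁻¹' S)) := by
  haveI := finiteV (n+3); haveI := finiteV (n+2); haveI := finiteV (n+1)
  rw [Nat.card_coe_set_eq, Nat.card_coe_set_eq, Nat.card_coe_set_eq]
  have hdec : S = (S ∩ {rt (n+3)}) ∪ (S ∩ {cp n}) ∪ (S ∩ Set.range (iA n))
      ∪ (S ∩ Set.range (iB n)) := by
    rw [← Set.inter_union_distrib_left, ← Set.inter_union_distrib_left,
      ← Set.inter_union_distrib_left, ← univ_decomp]
    exact (Set.inter_univ S).symm
  have dAB : ∀ (a : V (n+2)) (b : V (n+1)), iA n a ≠ iB n b := by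
    intro a b h
    have := congrArg Subtype.val h
    simp [iA, iB] at this
  have d3 : Disjoint ((S ∩ {rt (n+3)}) ∪ (S ∩ {cp n}) ∪ (S ∩ Set.range (iA n)))
      (S ∩ Set.range (iB n)) := by
    rw [Set.disjoint_left]
    rintro x ((⟨-, hx⟩ | ⟨-, hx⟩) | ⟨-, ⟨a, ha⟩⟩) ⟨-, ⟨b, hb⟩⟩
    · rw [Set.mem_singleton_iff] at hx
      subst hx
      have := congrArg Subtype.val hb
      simp [iB, rt] at this
    · rw [Set.mem_singleton_iff] at hx
      subst hx
      have := congrArg Subtype.val hb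
      simp [iB, cp] at this
    · exact dAB a b (ha.trans hb.symm)
  have d2 : Disjoint ((S ∩ {rt (n+3)}) ∪ (S ∩ {cp n})) (S ∩ Set.range (iA n)) := by
    rw [Set.disjoint_left]
    rintro x (⟨-, hx⟩ | ⟨-, hx⟩) ⟨-, ⟨a, ha⟩⟩
    · rw [Set.mem_singleton_iff] at hx
      subst hx
      have := congrArg Subtype.val ha
      simp [iA, rt] at this
    · rw [Set.mem_singleton_iff] at hx
      subst hx
      have := congrArg Subtype.val ha
      simp [iA, cp] at this
  have d1 : Disjoint (S ∩ {rt (n+3)}) (S ∩ {cp n}) := by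
    rw [Set.disjoint_left]
    rintro x ⟨-, hx⟩ ⟨-, hx'⟩
    rw [Set.mem_singleton_iff] at hx hx'
    subst hx
    have := congrArg Subtype.val hx'
    simp [rt, cp] at this
  nth_rewrite 1 [hdec]
  rw [Set.ncard_union_eq d3 (by exact Set.toFinite _) (by exact Set.toFinite _),
    Set.ncard_union_eq d2 (by exact Set.toFinite _) (by exact Set.toFinite _),
    Set.ncard_union_eq d1 (by exact Set.toFinite _) (by exact Set.toFinite _)]
  rw [card_singleton_inter, card_singleton_inter]
  rw [← Set.image_preimage_eq_inter_range (f := iA n),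
    ← Set.image_preimage_eq_inter_range (f := iB n),
    Set.ncard_image_of_injective _ (iA_inj n), Set.ncard_image_of_injective _ (iB_inj n)]

lemma adjA {n : ℕ} {a b : V (n+2)} (h : (posGraph (fibTree (n+2))).Adj a b) :
    (posGraph (fibTree (n+3))).Adj (iA n a) (iA n b) := by
  rcases h with ⟨i, hi⟩ | ⟨i, hi⟩
  · exact Or.inl ⟨i, by simp [iA, hi]⟩
  · exact Or.inr ⟨i, by simp [iA, hi]⟩

lemma adjB {n : ℕ} {a b : V (n+1)} (h : (posGraph (fibTree (n+1))).Adj a b) :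
    (posGraph (fibTree (n+3))).Adj (iB n a) (iB n b) := by
  rcases h with ⟨i, hi⟩ | ⟨i, hi⟩
  · exact Or.inl ⟨i, by simp [iB, hi]⟩
  · exact Or.inr ⟨i, by simp [iB, hi]⟩

lemma adj_rt_cp (n : ℕ) : (posGraph (fibTree (n+3))).Adj (rt (n+3)) (cp n) :=
  Or.inl ⟨0, rfl⟩

lemma adj_cp_A (n : ℕ) : (posGraph (fibTree (n+3))).Adj (cp n) (iA n (rt (n+2))) :=
  Or.inl ⟨0, rfl⟩

lemma adj_cp_B (n : ℕ) : (posGraph (fibTree (n+3))).Adj (cp n) (iB n (rt (n+1))) :=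
  Or.inl ⟨1, rfl⟩

lemma even_two_add (k : ℕ) : Even (2 + k) ↔ Even k := by
  constructor
  · rintro ⟨r, hr⟩; exact ⟨r - 1, by omega⟩
  · rintro ⟨r, hr⟩; exact ⟨r + 1, by omega⟩

theorem Qbase (N : ℕ) (hleaf : fibTree N = RTree.node []) (hfib : (Nat.fib N : ℤ) = 1)
    (R B Y : Set (V N))
    (hRB : Disjoint R B) (hRY : Disjoint R Y) (hBY : Disjoint B Y)
    (hcover : R ∪ B ∪ Y = Set.univ)
    (hY : ∀ v ∈ Y, ¬ Even v.1.length) :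
    ∃ (y : ℕ) (c : ℕ → ℤ) (ε : ℤ),
      y ≤ Nat.card Y ∧
      (∀ j, j ∉ Finset.Icc 1 N → c j = 0) ∧
      (∑ j ∈ Finset.Icc 1 N, (c j).natAbs) ≤ 2 * Nat.card Y ∧
      (ε = 0 ∨ ε = 1) ∧
      ((rt N) ∈ B → ε = 1) ∧
      ((rt N) ∉ B → ε = 0) ∧
      ((Nat.fib N : ℤ) - Nat.card R + Nat.card B + Nat.card Y
        = 2 * ((y : ℤ) + (ε * (Nat.fib N : ℤ) + ∑ j ∈ Finset.Icc 1 N, c j * (Nat.fib j : ℤ)))) ∧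
      0 ≤ ε * (Nat.fib N : ℤ) + ∑ j ∈ Finset.Icc 1 N, c j * (Nat.fib j : ℤ) ∧
      ε * (Nat.fib N : ℤ) + ∑ j ∈ Finset.Icc 1 N, c j * (Nat.fib j : ℤ) ≤ (Nat.fib N : ℤ) := by
  haveI : Subsingleton (V N) := ⟨by
    rintro ⟨la, pa⟩ ⟨lb, pb⟩
    rw [hleaf] at pa pb
    exact Subtype.ext ((isPos_leaf _ pa).trans (isPos_leaf _ pb).symm)⟩
  have hrtY : rt N ∉ Y := fun h => hY _ h Even.zero
  have hsub : ∀ v : V N, v = rt N := fun v => Subsingleton.elim v (rt N)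
  have hcard_one : ∀ S : Set (V N), rt N ∈ S → Nat.card S = 1 := by
    intro S hS
    rw [Nat.card_coe_set_eq,
      Set.eq_singleton_iff_unique_mem.2 ⟨hS, fun v _ => hsub v⟩, Set.ncard_singleton]
  have hcard_zero : ∀ S : Set (V N), rt N ∉ S → Nat.card S = 0 := by
    intro S hS
    rw [Nat.card_coe_set_eq,
      Set.eq_empty_iff_forall_notMem.2 (fun v hv => hS (hsub v ▸ hv)), Set.ncard_empty]
  have hrt : rt N ∈ R ∪ B ∪ Y := by rw [hcover]; trivial
  have hzsum : (∑ j ∈ Finset.Icc 1 N, (0:ℤ) * (Nat.fib j : ℤ)) = 0 := by simp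
  rcases hrt with (hrtR | hrtB) | hrtYm
  · have hB0 := hcard_zero B (Set.disjoint_left.1 hRB hrtR)
    have hY0 := hcard_zero Y hrtY
    have hR1 := hcard_one R hrtR
    refine ⟨0, fun _ => 0, 0, by omega, fun _ _ => rfl, by simp, Or.inl rfl,
      fun h => absurd h (Set.disjoint_left.1 hRB hrtR), fun _ => rfl, ?_, ?_, ?_⟩
    · rw [hR1, hB0, hY0, hzsum, hfib]; push_cast; try ring
    · rw [hzsum]; simp
    · rw [hzsum, hfib]; norm_num
  · have hR0 := hcard_zero R (Set.disjoint_right.1 hRB hrtB)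
    have hY0 := hcard_zero Y hrtY
    have hB1 := hcard_one B hrtB
    refine ⟨0, fun _ => 0, 1, by omega, fun _ _ => rfl, by simp, Or.inr rfl,
      fun _ => rfl, fun h => absurd hrtB h, ?_, ?_, ?_⟩
    · rw [hR0, hB1, hY0, hzsum, hfib]; push_cast; try ring
    · rw [hzsum, hfib]; norm_num
    · rw [hzsum, hfib]; norm_num
  · exact absurd hrtYm hrtY

theorem Q : ∀ N, 1 ≤ N → ∀ (R B Y : Set (V N)),
    Disjoint R B → Disjoint R Y → Disjoint B Y → R ∪ B ∪ Y = Set.univ →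
    (∀ u ∈ R, ∀ v ∈ R, ¬ (posGraph (fibTree N)).Adj u v) →
    (∀ u ∈ B, ∀ v ∈ B, ¬ (posGraph (fibTree N)).Adj u v) →
    (∀ v ∈ Y, ¬ Even v.1.length) →
    ∃ (y : ℕ) (c : ℕ → ℤ) (ε : ℤ),
      y ≤ Nat.card Y ∧
      (∀ j, j ∉ Finset.Icc 1 N → c j = 0) ∧
      (∑ j ∈ Finset.Icc 1 N, (c j).natAbs) ≤ 2 * Nat.card Y ∧
      (ε = 0 ∨ ε = 1) ∧
      ((rt N) ∈ B → ε = 1) ∧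
      ((rt N) ∉ B → ε = 0) ∧
      ((Nat.fib N : ℤ) - Nat.card R + Nat.card B + Nat.card Y
        = 2 * ((y : ℤ) + (ε * (Nat.fib N : ℤ) + ∑ j ∈ Finset.Icc 1 N, c j * (Nat.fib j : ℤ)))) ∧
      0 ≤ ε * (Nat.fib N : ℤ) + ∑ j ∈ Finset.Icc 1 N, c j * (Nat.fib j : ℤ) ∧
      ε * (Nat.fib N : ℤ) + ∑ j ∈ Finset.Icc 1 N, c j * (Nat.fib j : ℤ) ≤ (Nat.fib N : ℤ) := by
  intro N
  induction N using Nat.strong_induction_on with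
  | _ N IH =>
    rcases N with - | (- | (- | n))
    · exact fun h => absurd h (by omega)
    · intro _ R B Y hRB hRY hBY hcover hRind hBind hY
      exact Qbase 1 rfl (by norm_num) R B Y hRB hRY hBY hcover hY
    · intro _ R B Y hRB hRY hBY hcover hRind hBind hY
      exact Qbase 2 rfl (by norm_num) R B Y hRB hRY hBY hcover hY
    · intro _ R B Y hRB hRY hBY hcover hRind hBind hY
      haveI := finiteV (n+3); haveI := finiteV (n+2); haveI := finiteV (n+1)
      have memRBY : ∀ v : V (n+3), v ∈ R ∨ v ∈ B ∨ v ∈ Y := by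
        intro v
        have h : v ∈ R ∪ B ∪ Y := by rw [hcover]; trivial
        rcases h with (h | h) | h
        exacts [Or.inl h, Or.inr (Or.inl h), Or.inr (Or.inr h)]
      have hrtY : rt (n+3) ∉ Y := fun h => hY _ h Even.zero
      have haY : iA n (rt (n+2)) ∉ Y := fun h => hY _ h ⟨1, rfl⟩
      have hbY : iB n (rt (n+1)) ∉ Y := fun h => hY _ h ⟨1, rfl⟩
      have hcoverA : (iA n ⁻¹' R) ∪ (iA n ⁻¹' B) ∪ (iA n ⁻¹' Y) = Set.univ := by
        rw [← Set.preimage_union, ← Set.preimage_union, hcover]; rfl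
      have hcoverB : (iB n ⁻¹' R) ∪ (iB n ⁻¹' B) ∪ (iB n ⁻¹' Y) = Set.univ := by
        rw [← Set.preimage_union, ← Set.preimage_union, hcover]; rfl
      obtain ⟨yA, cA, εA, hyA, hsuppA, hwtA, hε01A, hεBA, hεnBA, heqA, hv0A, hv1A⟩ :=
        IH (n+2) (by omega) (by omega) (iA n ⁻¹' R) (iA n ⁻¹' B) (iA n ⁻¹' Y)
          (hRB.preimage _) (hRY.preimage _) (hBY.preimage _) hcoverA
          (fun u hu v hv hadj => hRind _ hu _ hv (adjA hadj))
          (fun u hu v hv hadj => hBind _ hu _ hv (adjA hadj))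
          (fun v hv hev => hY _ hv (by
            obtain ⟨r, hr⟩ := hev
            exact ⟨r + 1, by simp [iA]; omega⟩))
      obtain ⟨yB, cB, εB, hyB, hsuppB, hwtB, hε01B, hεBB, hεnBB, heqB, hv0B, hv1B⟩ :=
        IH (n+1) (by omega) (by omega) (iB n ⁻¹' R) (iB n ⁻¹' B) (iB n ⁻¹' Y)
          (hRB.preimage _) (hRY.preimage _) (hBY.preimage _) hcoverB
          (fun u hu v hv hadj => hRind _ hu _ hv (adjB hadj))
          (fun u hu v hv hadj => hBind _ hu _ hv (adjB hadj))
          (fun v hv hev => hY _ hv (by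
            obtain ⟨r, hr⟩ := hev
            exact ⟨r + 1, by simp [iB]; omega⟩))
      have cRd := card_decomp n R
      have cBd := card_decomp n B
      have cYd := card_decomp n Y
      have hfib3 : (Nat.fib (n+3) : ℤ) = (Nat.fib (n+2) : ℤ) + (Nat.fib (n+1) : ℤ) := by
        push_cast [Nat.fib_add_two]; ring
      have hsubA : Finset.Icc 1 (n+2) ⊆ Finset.Icc 1 (n+3) :=
        Finset.Icc_subset_Icc_right (by omega)
      have hsubB : Finset.Icc 1 (n+1) ⊆ Finset.Icc 1 (n+3) :=
        Finset.Icc_subset_Icc_right (by omega)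
      have hsumA : (∑ j ∈ Finset.Icc 1 (n+3), cA j * (Nat.fib j : ℤ))
          = ∑ j ∈ Finset.Icc 1 (n+2), cA j * (Nat.fib j : ℤ) :=
        (Finset.sum_subset hsubA (fun x _ hx => by rw [hsuppA x hx, zero_mul])).symm
      have hsumB : (∑ j ∈ Finset.Icc 1 (n+3), cB j * (Nat.fib j : ℤ))
          = ∑ j ∈ Finset.Icc 1 (n+1), cB j * (Nat.fib j : ℤ) :=
        (Finset.sum_subset hsubB (fun x _ hx => by rw [hsuppB x hx, zero_mul])).symm
      have hwA : (∑ j ∈ Finset.Icc 1 (n+3), (cA j).natAbs)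
          = ∑ j ∈ Finset.Icc 1 (n+2), (cA j).natAbs :=
        (Finset.sum_subset hsubA (fun x _ hx => by rw [hsuppA x hx]; rfl)).symm
      have hwB : (∑ j ∈ Finset.Icc 1 (n+3), (cB j).natAbs)
          = ∑ j ∈ Finset.Icc 1 (n+1), (cB j).natAbs :=
        (Finset.sum_subset hsubB (fun x _ hx => by rw [hsuppB x hx]; rfl)).symm
      have hmem2 : (n+2) ∈ Finset.Icc 1 (n+3) := Finset.mem_Icc.2 ⟨by omega, by omega⟩
      have hmem1 : (n+1) ∈ Finset.Icc 1 (n+3) := Finset.mem_Icc.2 ⟨by omega, by omega⟩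
      rcases memRBY (cp n) with hcpR | hcpB | hcpY
      · -- middle vertex is red
        have hcpnB : cp n ∉ B := Set.disjoint_left.1 hRB hcpR
        have hcpnY : cp n ∉ Y := Set.disjoint_left.1 hRY hcpR
        have hrtnR : rt (n+3) ∉ R := fun h => hRind _ h _ hcpR (adj_rt_cp n)
        have hrtB : rt (n+3) ∈ B := by
          rcases memRBY (rt (n+3)) with h | h | h
          · exact absurd h hrtnR
          · exact h
          · exact absurd h hrtY
        have haB : iA n (rt (n+2)) ∈ B := by
          rcases memRBY (iA n (rt (n+2))) with h | h | h
          · exact absurd (adj_cp_A n) (hRind _ hcpR _ h)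
          · exact h
          · exact absurd h haY
        have hbB : iB n (rt (n+1)) ∈ B := by
          rcases memRBY (iB n (rt (n+1))) with h | h | h
          · exact absurd (adj_cp_B n) (hRind _ hcpR _ h)
          · exact h
          · exact absurd h hbY
        have hεA1 : εA = 1 := hεBA haB
        have hεB1 : εB = 1 := hεBB hbB
        rw [hεA1, one_mul] at heqA hv0A hv1A
        rw [hεB1, one_mul] at heqB hv0B hv1B
        rw [if_neg hrtnR, if_pos hcpR] at cRd
        rw [if_pos hrtB, if_neg hcpnB] at cBd
        rw [if_neg hrtY, if_neg hcpnY] at cYd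
        have hsumC : (∑ j ∈ Finset.Icc 1 (n+3), (cA j + cB j) * (Nat.fib j : ℤ))
            = (∑ j ∈ Finset.Icc 1 (n+2), cA j * (Nat.fib j : ℤ))
              + ∑ j ∈ Finset.Icc 1 (n+1), cB j * (Nat.fib j : ℤ) := by
          rw [Finset.sum_congr rfl (fun j _ => add_mul (cA j) (cB j) _),
            Finset.sum_add_distrib, hsumA, hsumB]
        refine ⟨yA + yB, fun j => cA j + cB j, 1, ?_, ?_, ?_, Or.inr rfl,
          fun _ => rfl, fun h => absurd hrtB h, ?_, ?_, ?_⟩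
        · omega
        · intro j hj
          show cA j + cB j = 0
          rw [hsuppA j (fun h => hj (hsubA h)), hsuppB j (fun h => hj (hsubB h)), add_zero]
        · calc (∑ j ∈ Finset.Icc 1 (n+3), ((cA j + cB j)).natAbs)
              ≤ ∑ j ∈ Finset.Icc 1 (n+3), ((cA j).natAbs + (cB j).natAbs) :=
                Finset.sum_le_sum (fun j _ => Int.natAbs_add_le _ _)
            _ = (∑ j ∈ Finset.Icc 1 (n+3), (cA j).natAbs)
                + ∑ j ∈ Finset.Icc 1 (n+3), (cB j).natAbs := Finset.sum_add_distrib
            _ ≤ 2 * Nat.card Y := by rw [hwA, hwB]; omega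
        · rw [hsumC]
          push_cast
          linarith [heqA, heqB, hfib3,
            (by exact_mod_cast cRd : (Nat.card R : ℤ) = 0 + 1 + Nat.card (iA n ⁻¹' R) + Nat.card (iB n ⁻¹' R)),
            (by exact_mod_cast cBd : (Nat.card B : ℤ) = 1 + 0 + Nat.card (iA n ⁻¹' B) + Nat.card (iB n ⁻¹' B)),
            (by exact_mod_cast cYd : (Nat.card Y : ℤ) = 0 + 0 + Nat.card (iA n ⁻¹' Y) + Nat.card (iB n ⁻¹' Y))]
        · rw [hsumC]; rw [hfib3]; linarith [hv0A, hv0B]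
        · rw [hsumC]; rw [hfib3]; linarith [hv1A, hv1B]
      · -- middle vertex is blue
        have hcpnR : cp n ∉ R := Set.disjoint_right.1 hRB hcpB
        have hcpnY : cp n ∉ Y := Set.disjoint_left.1 hBY hcpB
        have hrtnB : rt (n+3) ∉ B := fun h => hBind _ h _ hcpB (adj_rt_cp n)
        have hrtR : rt (n+3) ∈ R := by
          rcases memRBY (rt (n+3)) with h | h | h
          · exact h
          · exact absurd h hrtnB
          · exact absurd h hrtY
        have hanB : iA n (rt (n+2)) ∉ B :=
          fun h => (hBind _ hcpB _ h) (adj_cp_A n)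
        have hbnB : iB n (rt (n+1)) ∉ B :=
          fun h => (hBind _ hcpB _ h) (adj_cp_B n)
        have hεA0 : εA = 0 := hεnBA hanB
        have hεB0 : εB = 0 := hεnBB hbnB
        rw [hεA0, zero_mul, zero_add] at heqA hv0A hv1A
        rw [hεB0, zero_mul, zero_add] at heqB hv0B hv1B
        rw [if_pos hrtR, if_neg hcpnR] at cRd
        rw [if_neg hrtnB, if_pos hcpB] at cBd
        rw [if_neg hrtY, if_neg hcpnY] at cYd
        have hsumC : (∑ j ∈ Finset.Icc 1 (n+3), (cA j + cB j) * (Nat.fib j : ℤ))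
            = (∑ j ∈ Finset.Icc 1 (n+2), cA j * (Nat.fib j : ℤ))
              + ∑ j ∈ Finset.Icc 1 (n+1), cB j * (Nat.fib j : ℤ) := by
          rw [Finset.sum_congr rfl (fun j _ => add_mul (cA j) (cB j) _),
            Finset.sum_add_distrib, hsumA, hsumB]
        refine ⟨yA + yB, fun j => cA j + cB j, 0, ?_, ?_, ?_, Or.inl rfl,
          fun h => absurd h hrtnB, fun _ => rfl, ?_, ?_, ?_⟩
        · omega
        · intro j hj
          show cA j + cB j = 0
          rw [hsuppA j (fun h => hj (hsubA h)), hsuppB j (fun h => hj (hsubB h)), add_zero]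
        · calc (∑ j ∈ Finset.Icc 1 (n+3), ((cA j + cB j)).natAbs)
              ≤ ∑ j ∈ Finset.Icc 1 (n+3), ((cA j).natAbs + (cB j).natAbs) :=
                Finset.sum_le_sum (fun j _ => Int.natAbs_add_le _ _)
            _ = (∑ j ∈ Finset.Icc 1 (n+3), (cA j).natAbs)
                + ∑ j ∈ Finset.Icc 1 (n+3), (cB j).natAbs := Finset.sum_add_distrib
            _ ≤ 2 * Nat.card Y := by rw [hwA, hwB]; omega
        · rw [hsumC]
          push_cast
          linarith [heqA, heqB, hfib3,
            (by exact_mod_cast cRd : (Nat.card R : ℤ) = 1 + 0 + Nat.card (iA n ⁻¹' R) + Nat.card (iB n ⁻¹' R)),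
            (by exact_mod_cast cBd : (Nat.card B : ℤ) = 0 + 1 + Nat.card (iA n ⁻¹' B) + Nat.card (iB n ⁻¹' B)),
            (by exact_mod_cast cYd : (Nat.card Y : ℤ) = 0 + 0 + Nat.card (iA n ⁻¹' Y) + Nat.card (iB n ⁻¹' Y))]
        · rw [hsumC]; simp only [zero_mul, zero_add]; linarith [hv0A, hv0B]
        · rw [hsumC]; rw [hfib3]; linarith [hv1A, hv1B]
      · -- middle vertex is yellow
        have hcpnR : cp n ∉ R := Set.disjoint_right.1 hRY hcpY
        have hcpnB : cp n ∉ B := Set.disjoint_right.1 hBY hcpY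
        rw [if_neg hcpnR] at cRd
        rw [if_neg hcpnB] at cBd
        rw [if_neg hrtY, if_pos hcpY] at cYd
        have hite_sum : ∀ (a : ℕ), a ∈ Finset.Icc 1 (n+3) → ∀ (t : ℤ),
            (∑ j ∈ Finset.Icc 1 (n+3), (if j = a then t else 0) * (Nat.fib j : ℤ))
              = t * (Nat.fib a : ℤ) := by
          intro a ha t
          have h1 : ∀ j ∈ Finset.Icc 1 (n+3),
              (if j = a then t else 0) * (Nat.fib j : ℤ)
                = (if j = a then t * (Nat.fib j : ℤ) else 0) := by
            intro j _; split_ifs <;> ring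
          rw [Finset.sum_congr rfl h1,
            Finset.sum_ite_eq' (Finset.Icc 1 (n+3)) a (fun j => t * (Nat.fib j : ℤ)), if_pos ha]
        have hite_wt : ∀ (a : ℕ), a ∈ Finset.Icc 1 (n+3) → ∀ (t : ℤ),
            (∑ j ∈ Finset.Icc 1 (n+3), ((if j = a then t else 0)).natAbs) = t.natAbs := by
          intro a ha t
          have h1 : ∀ j ∈ Finset.Icc 1 (n+3),
              ((if j = a then t else 0)).natAbs = (if j = a then t.natAbs else 0) := by
            intro j _; split_ifs <;> rfl
          rw [Finset.sum_congr rfl h1,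
            Finset.sum_ite_eq' (Finset.Icc 1 (n+3)) a (fun _ => t.natAbs), if_pos ha]
        have key : ∀ (u v : ℤ), (u = 0 ∨ u = 1) → (v = 0 ∨ v = 1) →
            ∀ er : ℕ, (er = 0 ∨ er = 1) →
            (∑ j ∈ Finset.Icc 1 (n+3),
              (cA j + cB j + ((if j = n+2 then u - er else 0) + (if j = n+1 then v - er else 0)))
                * (Nat.fib j : ℤ))
              = (∑ j ∈ Finset.Icc 1 (n+2), cA j * (Nat.fib j : ℤ))
                + (∑ j ∈ Finset.Icc 1 (n+1), cB j * (Nat.fib j : ℤ))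
                + ((u - er) * (Nat.fib (n+2) : ℤ) + (v - er) * (Nat.fib (n+1) : ℤ)) := by
          intro u v _ _ er _
          have hexp : ∀ j ∈ Finset.Icc 1 (n+3),
              (cA j + cB j + ((if j = n+2 then u - er else 0) + (if j = n+1 then v - er else 0)))
                  * (Nat.fib j : ℤ)
                = cA j * (Nat.fib j : ℤ) + cB j * (Nat.fib j : ℤ)
                  + ((if j = n+2 then u - er else 0) * (Nat.fib j : ℤ)
                    + (if j = n+1 then v - er else 0) * (Nat.fib j : ℤ)) := by
            intro j _; ring
          rw [Finset.sum_congr rfl hexp, Finset.sum_add_distrib, Finset.sum_add_distrib,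
            Finset.sum_add_distrib, hsumA, hsumB, hite_sum (n+2) hmem2 (u - er),
            hite_sum (n+1) hmem1 (v - er)]
        have keywt : ∀ (u v : ℤ), (u = 0 ∨ u = 1) → (v = 0 ∨ v = 1) →
            ∀ er : ℕ, (er = 0 ∨ er = 1) →
            (∑ j ∈ Finset.Icc 1 (n+3),
              ((cA j + cB j + ((if j = n+2 then u - er else 0) + (if j = n+1 then v - er else 0)))).natAbs)
              ≤ 2 * Nat.card Y := by
          intro u v hu hv er her
          have habs : ∀ j ∈ Finset.Icc 1 (n+3),
              ((cA j + cB j + ((if j = n+2 then u - er else 0) + (if j = n+1 then v - er else 0)))).natAbs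
                ≤ (cA j).natAbs + (cB j).natAbs
                  + (((if j = n+2 then u - er else 0)).natAbs
                    + ((if j = n+1 then v - er else 0)).natAbs) := by
            intro j _; omega
          calc (∑ j ∈ Finset.Icc 1 (n+3),
              ((cA j + cB j + ((if j = n+2 then u - er else 0) + (if j = n+1 then v - er else 0)))).natAbs)
              ≤ ∑ j ∈ Finset.Icc 1 (n+3), ((cA j).natAbs + (cB j).natAbs
                + (((if j = n+2 then u - er else 0)).natAbs
                  + ((if j = n+1 then v - er else 0)).natAbs)) := Finset.sum_le_sum habs
            _ = (∑ j ∈ Finset.Icc 1 (n+3), (cA j).natAbs)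
                + (∑ j ∈ Finset.Icc 1 (n+3), (cB j).natAbs)
                + ((∑ j ∈ Finset.Icc 1 (n+3), ((if j = n+2 then u - er else 0)).natAbs)
                  + (∑ j ∈ Finset.Icc 1 (n+3), ((if j = n+1 then v - er else 0)).natAbs)) := by
                rw [Finset.sum_add_distrib, Finset.sum_add_distrib, Finset.sum_add_distrib]
            _ ≤ 2 * Nat.card Y := by
                rw [hwA, hwB, hite_wt (n+2) hmem2 (u - er), hite_wt (n+1) hmem1 (v - er)]
                have h1 : (u - er).natAbs ≤ 1 := by rcases hu with h|h <;> rcases her with h'|h' <;> simp [h, h']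
                have h2 : (v - er).natAbs ≤ 1 := by rcases hv with h|h <;> rcases her with h'|h' <;> simp [h, h']
                omega
        have keysupp : ∀ (u v : ℤ) (er : ℕ), ∀ j, j ∉ Finset.Icc 1 (n+3) →
            cA j + cB j + ((if j = n+2 then u - er else 0) + (if j = n+1 then v - er else 0)) = 0 := by
          intro u v er j hj
          have h2 : j ≠ n+2 := fun h => hj (h ▸ hmem2)
          have h1 : j ≠ n+1 := fun h => hj (h ▸ hmem1)
          rw [hsuppA j (fun h => hj (hsubA h)), hsuppB j (fun h => hj (hsubB h)),
            if_neg h2, if_neg h1]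
          ring
        rcases memRBY (rt (n+3)) with hrtR | hrtB | h
        · -- root red
          have hrtnB : rt (n+3) ∉ B := Set.disjoint_left.1 hRB hrtR
          rw [if_pos hrtR] at cRd
          rw [if_neg hrtnB] at cBd
          have hsumC := key εA εB hε01A hε01B 0 (Or.inl rfl)
          have hwtC := keywt εA εB hε01A hε01B 0 (Or.inl rfl)
          simp only [Nat.cast_zero, sub_zero] at hsumC hwtC
          refine ⟨yA + yB,
            fun j => cA j + cB j + ((if j = n+2 then εA else 0) + (if j = n+1 then εB else 0)),
            0, ?_, ?_, hwtC, Or.inl rfl, fun h => absurd h hrtnB, fun _ => rfl, ?_, ?_, ?_⟩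
          · omega
          · intro j hj
            have := keysupp εA εB 0 j hj
            simpa using this
          · rw [hsumC]
            push_cast
            linarith [heqA, heqB, hfib3,
              (by exact_mod_cast cRd : (Nat.card R : ℤ) = 1 + 0 + Nat.card (iA n ⁻¹' R) + Nat.card (iB n ⁻¹' R)),
              (by exact_mod_cast cBd : (Nat.card B : ℤ) = 0 + 0 + Nat.card (iA n ⁻¹' B) + Nat.card (iB n ⁻¹' B)),
              (by exact_mod_cast cYd : (Nat.card Y : ℤ) = 0 + 1 + Nat.card (iA n ⁻¹' Y) + Nat.card (iB n ⁻¹' Y))]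
          · rw [hsumC]; simp only [zero_mul, zero_add]; linarith [hv0A, hv0B]
          · rw [hsumC]; rw [hfib3]; linarith [hv1A, hv1B]
        · -- root blue
          rw [if_neg (Set.disjoint_right.1 hRB hrtB)] at cRd
          rw [if_pos hrtB] at cBd
          have hsumC := key εA εB hε01A hε01B 1 (Or.inr rfl)
          have hwtC := keywt εA εB hε01A hε01B 1 (Or.inr rfl)
          simp only [Nat.cast_one] at hsumC hwtC
          refine ⟨yA + yB + 1,
            fun j => cA j + cB j + ((if j = n+2 then εA - 1 else 0) + (if j = n+1 then εB - 1 else 0)),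
            1, ?_, ?_, hwtC, Or.inr rfl, fun _ => rfl, fun h => absurd hrtB h, ?_, ?_, ?_⟩
          · omega
          · intro j hj
            have := keysupp εA εB 1 j hj
            simpa using this
          · rw [hsumC]
            push_cast
            linarith [heqA, heqB, hfib3,
              (by exact_mod_cast cRd : (Nat.card R : ℤ) = 0 + 0 + Nat.card (iA n ⁻¹' R) + Nat.card (iB n ⁻¹' R)),
              (by exact_mod_cast cBd : (Nat.card B : ℤ) = 1 + 0 + Nat.card (iA n ⁻¹' B) + Nat.card (iB n ⁻¹' B)),
              (by exact_mod_cast cYd : (Nat.card Y : ℤ) = 0 + 1 + Nat.card (iA n ⁻¹' Y) + Nat.card (iB n ⁻¹' Y))]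
          · rw [hsumC]; rw [hfib3]; linarith [hv0A, hv0B]
          · rw [hsumC]; rw [hfib3]; linarith [hv1A, hv1B]
        · exact absurd h hrtY

end FibPf

/-- Let `(R, B, Y)` be a partition of `V(T^F_N)` with `R`, `B`
independent and `|R| ≥ |B|`, and suppose `Y` avoids the color class `C1(T^F_N)` of
the root (the positions of even depth). Then there are `y ∈ [0, |Y|]` and
coefficients `z_j ∈ {−1, 0, 1}` with `Σ_j |z_j| ≤ 2|Y| + 1` such that
`(F_N − (|R| − |B|) + |Y|)/2 = y + Σ_{j=1}^N z_j F_j` (stated multiplied by 2). -/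
theorem fibTree_partition_fib_representation (N : ℕ) (hN : 1 ≤ N)
    (R B Y : Set {l : List ℕ // isPos (fibTree N) l})
    (hRB : Disjoint R B) (hRY : Disjoint R Y) (hBY : Disjoint B Y)
    (hcover : R ∪ B ∪ Y = Set.univ)
    (hRind : ∀ u ∈ R, ∀ v ∈ R, ¬ (posGraph (fibTree N)).Adj u v)
    (hBind : ∀ u ∈ B, ∀ v ∈ B, ¬ (posGraph (fibTree N)).Adj u v)
    (hY : ∀ v ∈ Y, ¬ Even v.1.length)
    (hk : Nat.card B ≤ Nat.card R) :
    ∃ (y : ℕ) (z : ℕ → ℤ),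
      y ≤ Nat.card Y ∧
      (∀ j, z j = -1 ∨ z j = 0 ∨ z j = 1) ∧
      (∑ j ∈ Finset.Icc 1 N, (z j).natAbs) ≤ 2 * Nat.card Y + 1 ∧
      (Nat.fib N : ℤ) - ((Nat.card R : ℤ) - Nat.card B) + Nat.card Y =
        2 * ((y : ℤ) + ∑ j ∈ Finset.Icc 1 N, z j * Nat.fib j) := by
  obtain ⟨y, c, ε, hy, hsupp, hwt, hε01, hεB, hεnB, heq, hv0, hv1⟩ :=
    FibPf.Q N hN R B Y hRB hRY hBY hcover hRind hBind hY
  rcases Nat.lt_or_ge N 2 with hN2 | hN2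
  · -- N = 1
    have hN1 : N = 1 := by omega
    subst hN1
    have hYe : Y = ∅ := by
      ext v
      simp only [Set.mem_empty_iff_false, iff_false]
      intro hv
      have h1 := hY v hv
      have hv1 : v.1 = [] := FibPf.isPos_leaf _ v.2
      rw [hv1] at h1
      exact h1 Even.zero
    have hY0 : Nat.card Y = 0 := by
      rw [hYe, Nat.card_coe_set_eq, Set.ncard_empty]
    have hc1 : c 1 = 0 := by
      have h := hwt
      rw [hY0] at h
      rw [show Finset.Icc 1 1 = {1} from rfl, Finset.sum_singleton] at h
      omega
    have hsum1 : (∑ j ∈ Finset.Icc 1 1, c j * (Nat.fib j : ℤ)) = 0 := by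
      rw [show Finset.Icc 1 1 = {1} from rfl, Finset.sum_singleton, hc1, zero_mul]
    refine ⟨y, fun j => if j = 1 then ε else 0, by omega, ?_, ?_, ?_⟩
    · intro j
      by_cases h : j = 1
      · rcases hε01 with h' | h' <;> simp [h, h']
      · simp [h]
    · have hzs : (∑ j ∈ Finset.Icc 1 1, ((fun j => if j = 1 then ε else 0) j).natAbs) = ε.natAbs := by
        rw [show Finset.Icc 1 1 = {1} from rfl, Finset.sum_singleton]
        simp
      rw [hzs]
      have : ε.natAbs ≤ 1 := by rcases hε01 with h | h <;> simp [h]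
      omega
    · have hzs : (∑ j ∈ Finset.Icc 1 1, (fun j => if j = 1 then ε else 0) j * (Nat.fib j : ℤ)) = ε := by
        rw [show Finset.Icc 1 1 = {1} from rfl, Finset.sum_singleton]
        simp
      rw [hzs]
      rw [hsum1] at heq
      simp only [Nat.fib_one, Nat.cast_one, mul_one, add_zero] at heq ⊢
      linarith [heq]
  · -- N ≥ 2
    obtain ⟨z, htern, hval, hwt'⟩ := FibPf.represent N hN2 c ε hε01 hv0 hv1
    simp only [FibPf.F] at hval hwt'
    refine ⟨y, z, hy, htern, ?_, ?_⟩
    · have hε1 : ε.toNat ≤ 1 := by rcases hε01 with h | h <;> simp [h]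
      omega
    · rw [hval]
      linarith [heq]
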